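/- arXiv:1808.07376 — 3 statements merged into one kernel-verified Lean document; each statement's English description precedes it below -/
import Mathlib

section
/- An observable A on state space S is compatible with the identity channel if and only if there is a channel Φ: S → S ⊗̇ P(Ω_A) such that for every extreme point y of S, Φ(y) = Σ_{i=1}^n A_i(y) · (y ⊗ δ_i). -/
/-- Membership in the cone generated by the state space `S` (the positivity cone). -/
def InCone {V : Type*} [AddCommGroup V] [Module ℝ V] (S : Set V) (x : V) : Prop :=
  ∃ c : ℝ, 0 ≤ c ∧ ∃ t ∈ S, x = c • t

/-- An effect on a state space `S`. -/
def IsEffect {V : Type*} [AddCommGroup V] [Module ℝ V]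
    (S : Set V) (e : V →ₗ[ℝ] ℝ) : Prop :=
  ∀ s ∈ S, 0 ≤ e s ∧ e s ≤ 1

/-- An observable with outcome set `Fin n`. -/
def IsObservable {V : Type*} [AddCommGroup V] [Module ℝ V]
    (S : Set V) (u : V →ₗ[ℝ] ℝ) {n : ℕ} (A : Fin n → (V →ₗ[ℝ] ℝ)) : Prop :=
  (∀ i, IsEffect S (A i)) ∧ ∑ i, A i = u

/-- A channel on `S`: a (linearly extended) affine map sending states to states. -/
def IsChannel {V : Type*} [AddCommGroup V] [Module ℝ V]
    (S : Set V) (Φ : V →ₗ[ℝ] V) : Prop :=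
  ∀ s ∈ S, Φ s ∈ S

/-- An operation: a positive map sending states into the subnormalized states. -/
def IsOperation {V : Type*} [AddCommGroup V] [Module ℝ V]
    (S : Set V) (u : V →ₗ[ℝ] ℝ) (Φ : V →ₗ[ℝ] V) : Prop :=
  ∀ s ∈ S, InCone S (Φ s) ∧ u (Φ s) ≤ 1

/-- The states of the minimal tensor product `S ⊗̇ P(Ω_A)`, identified with tuples
`f : Fin n → V` of positive elements with total weight one (the `i`-th component is
the unnormalized conditional state paired with the point distribution `δ i`). -/
def JointState {V : Type*} [AddCommGroup V] [Module ℝ V]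
    (S : Set V) (u : V →ₗ[ℝ] ℝ) {n : ℕ} (f : Fin n → V) : Prop :=
  (∀ i, InCone S (f i)) ∧ ∑ i, u (f i) = 1

/-- A channel `Φ` and an `n`-outcome observable `A` are compatible: there is a joint
channel `Φ̃ : S → S ⊗̇ P(Ω_A)` whose partial traces `u₂ ∘ Φ̃ = Σᵢ Φ̃(·)ᵢ` and
`u₁ ∘ Φ̃ = (u (Φ̃(·)ᵢ))ᵢ` reproduce `Φ` and `A`. -/
def ChannelObsCompatible {V : Type*} [AddCommGroup V] [Module ℝ V]
    (S : Set V) (u : V →ₗ[ℝ] ℝ) {n : ℕ}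
    (Φ : V →ₗ[ℝ] V) (A : Fin n → (V →ₗ[ℝ] ℝ)) : Prop :=
  ∃ Φt : V →ₗ[ℝ] (Fin n → V),
    (∀ s ∈ S, JointState S u (Φt s)) ∧
    (∀ s ∈ S, ∑ i, Φt s i = Φ s) ∧
    (∀ s ∈ S, ∀ i, u (Φt s i) = A i s)

/-!
Compatibility with the identity forces the joint channel `Φ` to satisfy `∑ᵢ Φ(y)ᵢ = y` with
`u(Φ(y)ᵢ) = Aᵢ(y)`. At an extreme point `y` this is a decomposition of `y` into positive
elements of the cone over `S`, and extremality makes every summand a multiple of `y`, so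
`Φ(y)ᵢ = Aᵢ(y) • y`. Conversely, if `Φ` has this form on the extreme points, both marginal
conditions are equalities of linear maps that hold on the extreme points, hence on their
closed convex hull, which is `S` by Krein–Milman.
-/

open Finset

section ExtremeDecomposition

variable {V : Type*} [AddCommGroup V] [Module ℝ V] {S : Set V}

theorem eq_of_mem_extremePoints_of_sum_smul_eq {ι : Type*} [Fintype ι] (hS : Convex ℝ S)
    {y : V} (hy : y ∈ S.extremePoints ℝ) {c : ι → ℝ} {t : ι → V} (hc : ∀ i, 0 ≤ c i)
    (ht : ∀ i, t i ∈ S) (hc_sum : ∑ i, c i = 1) (hy_eq : ∑ i, c i • t i = y) {i : ι}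
    (hci : 0 < c i) : t i = y := by
  classical
  by_contra hti
  set J := univ.filter fun j => t j ≠ y
  have hJ_pos : 0 < ∑ j ∈ J, c j :=
    hci.trans_le (single_le_sum (fun j _ => hc j) (mem_filter.2 ⟨mem_univ i, hti⟩))
  have hJ_sum : ∑ j ∈ J, c j • t j = (∑ j ∈ J, c j) • y := by
    have hdiff : ∑ j ∈ J, c j • (t j - y) = ∑ j, c j • (t j - y) :=
      sum_filter_of_ne fun j _ hj heq => hj (by rw [heq, sub_self, smul_zero])
    simpa only [smul_sub, sum_sub_distrib, ← sum_smul, hc_sum, hy_eq, one_smul, sub_self,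
      sub_eq_zero] using hdiff
  -- `S \ {y}` is convex, yet it would contain the centre of mass `y` of the points `t j ≠ y`.
  have hmem : J.centerMass c t ∈ S \ {y} :=
    ((hS.mem_extremePoints_iff_convex_sdiff.1 hy).2).centerMass_mem (fun j _ => hc j) hJ_pos
      fun j hj => ⟨ht j, (mem_filter.1 hj).2⟩
  exact hmem.2 (Set.mem_singleton_iff.2 (by rw [centerMass, hJ_sum, inv_smul_smul₀ hJ_pos.ne']))

theorem eq_smul_of_sum_eq_mem_extremePoints (hS : Convex ℝ S) {u : V →ₗ[ℝ] ℝ}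
    (hu : ∀ s ∈ S, u s = 1) {ι : Type*} [Fintype ι] {f : ι → V} (hf : ∀ i, InCone S (f i))
    {y : V} (hy : y ∈ S.extremePoints ℝ) (hf_sum : ∑ i, f i = y) (i : ι) :
    f i = u (f i) • y := by
  choose c hc t ht hf_eq using hf
  have hu_f : ∀ j, u (f j) = c j := fun j => by
    rw [hf_eq j, map_smul, hu _ (ht j), smul_eq_mul, mul_one]
  rw [hu_f, hf_eq i]
  rcases (hc i).eq_or_lt with h0 | hpos
  · simp [← h0]
  · have hc_sum : ∑ j, c j = 1 := by
      simp only [← hu_f, ← map_sum, hf_sum, hu y hy.1]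
    have hy_eq : ∑ j, c j • t j = y := by
      simp only [← hf_eq, hf_sum]
    rw [eq_of_mem_extremePoints_of_sum_smul_eq hS hy hc ht hc_sum hy_eq hpos]

end ExtremeDecomposition

theorem LinearMap.eqOn_of_eqOn_extremePoints {V W : Type*} [NormedAddCommGroup V]
    [NormedSpace ℝ V] [FiniteDimensional ℝ V] [NormedAddCommGroup W] [NormedSpace ℝ W]
    {S : Set V} (hS : Convex ℝ S) (hS_cpt : IsCompact S) {f g : V →ₗ[ℝ] W}
    (h : Set.EqOn f g (S.extremePoints ℝ)) : Set.EqOn f g S := by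
  rw [← closure_convexHull_extremePoints hS_cpt hS]
  exact closure_minimal (convexHull_min h (LinearMap.eqLocus f g).convex)
    (isClosed_eq f.continuous_of_finiteDimensional g.continuous_of_finiteDimensional)

theorem compatible_with_id_iff_extreme_channel_general
    {V : Type*} [NormedAddCommGroup V] [NormedSpace ℝ V] [FiniteDimensional ℝ V]
    (S : Set V) (hScvx : Convex ℝ S) (hScpt : IsCompact S)
    (u : V →ₗ[ℝ] ℝ) (hu : ∀ s ∈ S, u s = 1)
    {n : ℕ} (A : Fin n → (V →ₗ[ℝ] ℝ)) (hA : IsObservable S u A) :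
    ChannelObsCompatible S u (LinearMap.id : V →ₗ[ℝ] V) A ↔
      ∃ Φ : V →ₗ[ℝ] (Fin n → V),
        (∀ s ∈ S, JointState S u (Φ s)) ∧
        ∀ y ∈ Set.extremePoints ℝ S, ∀ i, Φ y i = A i y • y := by
  constructor
  · rintro ⟨Φ, hJ, hΦ_sum, hΦ_marg⟩
    refine ⟨Φ, hJ, fun y hy i => ?_⟩
    rw [eq_smul_of_sum_eq_mem_extremePoints hScvx hu (hJ y hy.1).1 hy (hΦ_sum y hy.1) i,
      hΦ_marg y hy.1 i]
  · rintro ⟨Φ, hJ, hΦ_ext⟩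
    refine ⟨Φ, hJ, fun s hs => ?_, fun s hs i => ?_⟩
    · have hA_sum : ∀ y, ∑ i, A i y = u y := fun y => by
        rw [← hA.2, LinearMap.sum_apply]
      have h := LinearMap.eqOn_of_eqOn_extremePoints (f := ∑ i, LinearMap.proj i ∘ₗ Φ)
        (g := LinearMap.id) hScvx hScpt (fun y hy => ?_) hs
      · simpa only [LinearMap.sum_apply, LinearMap.comp_apply, LinearMap.proj_apply] using h
      · simp only [LinearMap.sum_apply, LinearMap.comp_apply, LinearMap.proj_apply, hΦ_ext y hy,
          ← sum_smul, hA_sum, hu y hy.1, one_smul, LinearMap.id_apply]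
    · refine LinearMap.eqOn_of_eqOn_extremePoints (f := u ∘ₗ LinearMap.proj i ∘ₗ Φ) (g := A i)
        hScvx hScpt (fun y hy => ?_) hs
      simp only [LinearMap.comp_apply, LinearMap.proj_apply, hΦ_ext y hy, map_smul, hu y hy.1,
        smul_eq_mul, mul_one]

/-- Lemma 2: an observable `A` is compatible with the identity channel
iff there is a joint channel `Φ : S → S ⊗̇ P(Ω_A)` such that for every extreme point
`y` of `S`, `Φ(y) = ∑ᵢ Aᵢ(y) · (y ⊗ δᵢ)`, i.e. `Φ y i = Aᵢ(y) • y` for all `i`. -/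
theorem compatible_with_id_iff_extreme_channel
    {V : Type*} [NormedAddCommGroup V] [NormedSpace ℝ V] [FiniteDimensional ℝ V]
    (S : Set V) (hSne : S.Nonempty) (hScvx : Convex ℝ S) (hScpt : IsCompact S)
    (u : V →ₗ[ℝ] ℝ) (hu : ∀ s ∈ S, u s = 1)
    {n : ℕ} (A : Fin n → (V →ₗ[ℝ] ℝ)) (hA : IsObservable S u A) :
    ChannelObsCompatible S u (LinearMap.id : V →ₗ[ℝ] V) A ↔
      ∃ Φ : V →ₗ[ℝ] (Fin n → V),
        (∀ s ∈ S, JointState S u (Φ s)) ∧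
        ∀ y ∈ Set.extremePoints ℝ S, ∀ i, Φ y i = A i y • y :=
  compatible_with_id_iff_extreme_channel_general S hScvx hScpt u hu A hA
end

section
/- An observable A is compatible with the identity channel if and only if there exists a set {x_1, …, x_d} of affinely independent extreme points of S with S ⊆ aff{x_1,…,x_d} such that for every extreme point y = Σ_j α_j x_j of S and every outcome i, α_j (A_i(x_j) − A_i(y)) = 0 for all j. -/
/-- Any closed convex set containing the extreme points of a compact convex set `S`
contains `S` (Krein–Milman). -/
lemma aux_subset_of_closed_convex {V : Type*} [NormedAddCommGroup V] [NormedSpace ℝ V]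
    {S C : Set V} (hScvx : Convex ℝ S) (hScpt : IsCompact S)
    (hC : IsClosed C) (hCc : Convex ℝ C) (h : Set.extremePoints ℝ S ⊆ C) : S ⊆ C := by
  rw [← closure_convexHull_extremePoints hScpt hScvx]
  exact closure_minimal (convexHull_min h hCc) hC

/-- An extreme point written as a convex combination equals every component with
nonzero weight. -/
lemma aux_extreme_eq {V : Type*} [AddCommGroup V] [Module ℝ V] {S : Set V}
    (hS : Convex ℝ S) {y : V} (hy : y ∈ Set.extremePoints ℝ S) {m : ℕ}
    {c : Fin m → ℝ} {t : Fin m → V} (hc : ∀ i, 0 ≤ c i) (ht : ∀ i, t i ∈ S)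
    (hsum : ∑ i, c i = 1) (heq : y = ∑ i, c i • t i) :
    ∀ i, c i ≠ 0 → t i = y := by
  intro i hci
  have hci' : 0 < c i := (hc i).lt_of_ne (Ne.symm hci)
  have hrest : ∑ k ∈ Finset.univ.erase i, c k = 1 - c i := by
    have := Finset.add_sum_erase Finset.univ c (Finset.mem_univ i)
    rw [hsum] at this; linarith
  have hsplit : y = c i • t i + ∑ k ∈ Finset.univ.erase i, c k • t k := by
    rw [heq, ← Finset.add_sum_erase Finset.univ (fun k => c k • t k) (Finset.mem_univ i)]
  have hle : c i ≤ 1 := by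
    have : (0:ℝ) ≤ ∑ k ∈ Finset.univ.erase i, c k :=
      Finset.sum_nonneg fun k _ => hc k
    linarith
  rcases eq_or_lt_of_le hle with h1 | h1
  · -- c i = 1 : all other weights vanish
    have hz : ∀ k ∈ Finset.univ.erase i, c k = 0 := by
      intro k hk
      have h0 : ∑ k ∈ Finset.univ.erase i, c k = 0 := by rw [hrest, ← h1]; ring
      exact le_antisymm (h0 ▸ Finset.single_le_sum (fun k _ => hc k) hk) (hc k)
    have : y = t i := by
      rw [hsplit, Finset.sum_eq_zero (fun k hk => by rw [hz k hk, zero_smul]),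
        add_zero, h1, one_smul]
    exact this.symm
  · -- 0 < c i < 1 : use extremality on an open segment
    set r : ℝ := 1 - c i with hr
    have hrpos : 0 < r := by simp only [hr]; linarith
    set z : V := r⁻¹ • ∑ k ∈ Finset.univ.erase i, c k • t k with hz
    have hzS : z ∈ S := by
      have : z = ∑ k ∈ Finset.univ.erase i, (r⁻¹ * c k) • t k := by
        rw [hz, Finset.smul_sum]; simp [smul_smul]
      rw [this]
      refine hS.sum_mem (fun k _ => mul_nonneg (inv_nonneg.2 hrpos.le) (hc k)) ?_ (fun k _ => ht k)
      rw [← Finset.mul_sum, hrest, inv_mul_cancel₀ (ne_of_gt hrpos)]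
    have hyseg : y ∈ openSegment ℝ (t i) z := by
      refine ⟨c i, r, hci', hrpos, by simp [hr], ?_⟩
      rw [hz, smul_inv_smul₀ (ne_of_gt hrpos), ← hsplit]
    exact hy.2 (ht i) hzS hyseg



/-- The truncated cone over `S`. -/
def aux_D {V : Type*} [AddCommGroup V] [Module ℝ V] (S : Set V) : Set V :=
  (fun p : ℝ × V => p.1 • p.2) '' (Set.Icc (0:ℝ) 1 ×ˢ S)

lemma aux_D_compact {V : Type*} [NormedAddCommGroup V] [NormedSpace ℝ V]
    {S : Set V} (hS : IsCompact S) : IsCompact (aux_D S) :=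
  ((isCompact_Icc).prod hS).image (continuous_fst.smul continuous_snd)

lemma aux_D_convex {V : Type*} [AddCommGroup V] [Module ℝ V]
    {S : Set V} (hS : Convex ℝ S) : Convex ℝ (aux_D S) := by
  rintro _ ⟨⟨c1, t1⟩, ⟨⟨hc10, hc11⟩, ht1⟩, rfl⟩ _ ⟨⟨c2, t2⟩, ⟨⟨hc20, hc21⟩, ht2⟩, rfl⟩
    a b ha hb hab
  simp only [Set.mem_Icc] at *
  by_cases hz : a * c1 + b * c2 = 0
  · have h1 : a * c1 = 0 := by nlinarith
    have h2 : b * c2 = 0 := by nlinarith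
    refine ⟨(0, t1), ⟨⟨le_refl _, zero_le_one⟩, ht1⟩, ?_⟩
    simp [smul_smul, h1, h2]
  · have hc : 0 < a * c1 + b * c2 :=
      lt_of_le_of_ne (by positivity) (Ne.symm hz)
    set c : ℝ := a * c1 + b * c2 with hcdef
    refine ⟨(c, c⁻¹ • (a • c1 • t1 + b • c2 • t2)), ⟨⟨hc.le, by nlinarith⟩, ?_⟩, ?_⟩
    · have : c⁻¹ • (a • c1 • t1 + b • c2 • t2)
          = (a * c1 / c) • t1 + (b * c2 / c) • t2 := by
        simp [smul_add, smul_smul, div_eq_inv_mul, mul_comm, mul_assoc, mul_left_comm]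
      rw [this]
      exact hS ht1 ht2 (by positivity) (by positivity)
        (by field_simp; exact hcdef.symm)
    · simp only []
      rw [smul_inv_smul₀ (ne_of_gt hc)]

lemma aux_mem_D {V : Type*} [AddCommGroup V] [Module ℝ V] {S : Set V} {c : ℝ} {t : V}
    (hc0 : 0 ≤ c) (hc1 : c ≤ 1) (ht : t ∈ S) : c • t ∈ aux_D S :=
  ⟨(c, t), ⟨⟨hc0, hc1⟩, ht⟩, rfl⟩

lemma aux_D_inCone {V : Type*} [AddCommGroup V] [Module ℝ V] {S : Set V} {x : V}
    (hx : x ∈ aux_D S) : InCone S x := by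
  obtain ⟨⟨c, t⟩, ⟨⟨hc0, _⟩, ht⟩, rfl⟩ := hx
  exact ⟨c, hc0, t, ht, rfl⟩


/-- Prop. 3: an observable `A` is compatible with the identity channel
iff there is a set `x₁,…,x_d` of affinely independent extreme points of `S` with
`S ⊆ aff{x₁,…,x_d}` such that for every extreme point `y = ∑ⱼ αⱼ xⱼ` of `S` and every
outcome `i`, `αⱼ (Aᵢ(xⱼ) − Aᵢ(y)) = 0` for all `j`. -/
theorem compatible_with_id_iff_affine_condition
    {V : Type*} [NormedAddCommGroup V] [NormedSpace ℝ V] [FiniteDimensional ℝ V]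
    (S : Set V) (hSne : S.Nonempty) (hScvx : Convex ℝ S) (hScpt : IsCompact S)
    (u : V →ₗ[ℝ] ℝ) (hu : ∀ s ∈ S, u s = 1)
    {n : ℕ} (A : Fin n → (V →ₗ[ℝ] ℝ)) (hA : IsObservable S u A) :
    ChannelObsCompatible S u (LinearMap.id : V →ₗ[ℝ] V) A ↔
      ∃ (d : ℕ) (x : Fin d → V),
        (∀ j, x j ∈ Set.extremePoints ℝ S) ∧
        AffineIndependent ℝ x ∧
        S ⊆ affineSpan ℝ (Set.range x) ∧
        ∀ y ∈ Set.extremePoints ℝ S, ∀ α : Fin d → ℝ,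
          (∑ j, α j = 1 ∧ y = ∑ j, α j • x j) →
          ∀ i, ∀ j, α j * (A i (x j) - A i y) = 0 := by
  constructor
  · rintro ⟨Φt, hJ', hSum', hMarg⟩
    have hJ : ∀ s ∈ S, (∀ i, InCone S (Φt s i)) ∧ ∑ i, u (Φt s i) = 1 := hJ'
    have hSum : ∀ s ∈ S, ∑ i, Φt s i = s := by
      intro s hs; simpa using hSum' s hs
    have hAeff : ∀ i, ∀ s ∈ S, 0 ≤ A i s ∧ A i s ≤ 1 := hA.1
    have hAsum : ∑ i, A i = u := hA.2
    -- Step A: on extreme points, the instrument acts as `Φt y i = A i y • y`.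
    have hext : ∀ y ∈ Set.extremePoints ℝ S, ∀ i, Φt y i = A i y • y := by
      intro y hy i
      have hyS : y ∈ S := hy.1
      choose c hc t ht hct using (hJ y hyS).1
      have hcval : ∀ k, c k = A k y := by
        intro k
        have h := hMarg y hyS k
        rw [hct k, map_smul, smul_eq_mul, hu (t k) (ht k), mul_one] at h
        exact h
      have hsum1 : ∑ k, c k = 1 := by
        have h := (hJ y hyS).2
        calc ∑ k, c k = ∑ k, u (Φt y k) := by
              refine Finset.sum_congr rfl fun k _ => ?_
              rw [hct k, map_smul, smul_eq_mul, hu (t k) (ht k), mul_one]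
          _ = 1 := h
      have hyeq : y = ∑ k, c k • t k := by
        rw [← hSum y hyS]
        exact Finset.sum_congr rfl fun k _ => hct k
      have hkey := aux_extreme_eq hScvx hy (fun k => hc k) ht hsum1 hyeq
      by_cases h0 : c i = 0
      · rw [hct i, h0, zero_smul, ← hcval i, h0, zero_smul]
      · rw [hct i, hkey i h0, hcval i]
    -- Step B: an affinely independent family of extreme points spanning S.
    obtain ⟨t, htE, hspan, hind⟩ := exists_affineIndependent ℝ V (Set.extremePoints ℝ S)
    have hfin : t.Finite := finite_set_of_fin_dim_affineIndependent ℝ hind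
    haveI : Fintype t := hfin.fintype
    set d := Fintype.card t with hd
    set e : Fin d ≃ t := (Fintype.equivFin t).symm with he
    set x : Fin d → V := fun j => ((e j : t) : V) with hx
    have hxE : ∀ j, x j ∈ Set.extremePoints ℝ S := fun j => htE (e j).2
    have hxind : AffineIndependent ℝ x := hind.comp_embedding e.toEmbedding
    have hrange : Set.range x = t := by
      rw [hx]
      have : Set.range (fun j : Fin d => ((e j : t) : V))
          = Subtype.val '' Set.range e := by
        rw [← Set.range_comp]; rfl
      rw [this, e.range_eq_univ, Set.image_univ, Subtype.range_coe]
    have hxspan : S ⊆ affineSpan ℝ (Set.range x) := by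
      rw [hrange, hspan]
      refine aux_subset_of_closed_convex hScvx hScpt ?_ ?_ (subset_affineSpan ℝ _)
      · exact (affineSpan ℝ (Set.extremePoints ℝ S)).closed_of_finiteDimensional
      · exact (affineSpan ℝ (Set.extremePoints ℝ S)).convex
    refine ⟨d, x, hxE, hxind, hxspan, ?_⟩
    intro y hy α ⟨hα1, hαy⟩ i j
    have hxS : ∀ k, x k ∈ S := fun k => (hxE k).1
    -- key vector identity
    have hΦ : ∑ k, (α k * A i (x k)) • x k = A i y • y := by
      have h1 : Φt y i = ∑ k, α k • Φt (x k) i := by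
        rw [hαy, map_sum]
        simp only [Finset.sum_apply, Pi.smul_apply, map_smul]
      rw [← hext y hy i, h1]
      refine Finset.sum_congr rfl fun k _ => ?_
      rw [hext (x k) (hxE k) i, smul_smul]
    have hsumw : ∑ k, α k * A i (x k) = A i y := by
      have := congrArg u hΦ
      rw [map_sum, map_smul, smul_eq_mul, hu y hy.1, mul_one] at this
      calc ∑ k, α k * A i (x k)
          = ∑ k, u ((α k * A i (x k)) • x k) := by
            refine Finset.sum_congr rfl fun k _ => ?_
            rw [map_smul, smul_eq_mul, hu _ (hxS k), mul_one]
        _ = A i y := this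
    -- apply affine independence to the weights `w k = α k * (A i (x k) - A i y)`
    have hw0 : ∑ k, α k * (A i (x k) - A i y) = 0 := by
      have : ∑ k, α k * (A i (x k) - A i y)
          = (∑ k, α k * A i (x k)) - (∑ k, α k) * A i y := by
        rw [Finset.sum_mul, ← Finset.sum_sub_distrib]
        exact Finset.sum_congr rfl fun k _ => by ring
      rw [this, hsumw, hα1, one_mul, sub_self]
    have hwsum : ∑ k, (α k * (A i (x k) - A i y)) • x k = 0 := by
      have : ∀ k, (α k * (A i (x k) - A i y)) • x k
          = (α k * A i (x k)) • x k - (A i y) • (α k • x k) := by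
        intro k; rw [smul_smul, ← sub_smul]; ring_nf
      rw [Finset.sum_congr rfl fun k _ => this k, Finset.sum_sub_distrib,
        ← Finset.smul_sum, ← hαy, hΦ, sub_self]
    exact affineIndependent_iff.1 hxind Finset.univ _ hw0 hwsum j (Finset.mem_univ j)
  · rintro ⟨d, x, hxE, hxind, hxspan, hcond⟩
    have hAeff : ∀ i, ∀ s ∈ S, 0 ≤ A i s ∧ A i s ≤ 1 := hA.1
    have hAsum : ∑ i, A i = u := hA.2
    have main : ∃ Φt : V →ₗ[ℝ] (Fin n → V),
        (∀ s ∈ S, (∀ i, InCone S (Φt s i)) ∧ ∑ i, u (Φt s i) = 1) ∧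
        (∀ s ∈ S, ∑ i, Φt s i = s) ∧
        (∀ s ∈ S, ∀ i, u (Φt s i) = A i s) := by
      classical
      have hxS : ∀ j, x j ∈ S := fun j => (hxE j).1
      have hux : ∀ j, u (x j) = 1 := fun j => hu _ (hxS j)
      -- the family x is linearly independent
      have hli : LinearIndependent ℝ x := by
        rw [Fintype.linearIndependent_iff]
        intro c hc j
        have hsum0 : ∑ k, c k = 0 := by
          have h := congrArg u hc
          rw [map_sum, map_zero] at h
          calc ∑ k, c k = ∑ k, u (c k • x k) := by
                refine Finset.sum_congr rfl fun k _ => ?_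
                rw [map_smul, smul_eq_mul, hux k, mul_one]
            _ = 0 := h
        exact affineIndependent_iff.1 hxind Finset.univ c hsum0 hc j (Finset.mem_univ j)
      -- a linear left inverse giving coordinates
      set T : (Fin d → ℝ) →ₗ[ℝ] V := Fintype.linearCombination ℝ x with hT
      have hTapp : ∀ c : Fin d → ℝ, T c = ∑ k, c k • x k := fun c => rfl
      have hTker : LinearMap.ker T = ⊥ := by
        rw [LinearMap.ker_eq_bot']
        intro c hc
        funext j
        exact (Fintype.linearIndependent_iff.1 hli c (by rw [← hTapp]; exact hc)) j
      obtain ⟨L, hL⟩ := T.exists_leftInverse_of_injective hTker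
      have hLT : ∀ c : Fin d → ℝ, L (T c) = c := by
        intro c
        have := congrArg (fun f => f c) hL
        simpa using this
      -- coordinates of states
      have hβ : ∀ s ∈ S, (∑ j, L s j = 1 ∧ ∑ j, (L s j) • x j = s) := by
        intro s hs
        obtain ⟨w, hw1, hww⟩ :=
          eq_affineCombination_of_mem_affineSpan_of_fintype (hxspan hs)
        rw [Finset.univ.affineCombination_eq_linear_combination x w hw1] at hww
        have hsw : s = T w := by rw [hTapp]; exact hww
        have hLs : L s = w := by rw [hsw, hLT]
        rw [hLs, hw1]
        exact ⟨rfl, by rw [hsw, hTapp]⟩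
      -- the joint channel
      set Φt : V →ₗ[ℝ] (Fin n → V) :=
        LinearMap.pi (fun i =>
          ∑ j, A i (x j) • (((LinearMap.proj j).comp L).smulRight (x j))) with hΦt
      have hΦapp : ∀ s i, Φt s i = ∑ j, (A i (x j) * L s j) • x j := by
        intro s i
        rw [hΦt]
        simp only [LinearMap.pi_apply, LinearMap.coe_sum, Finset.sum_apply,
          LinearMap.smul_apply, LinearMap.smulRight_apply, LinearMap.comp_apply,
          LinearMap.proj_apply, smul_smul]
      -- extreme point evaluation
      have hext : ∀ y ∈ Set.extremePoints ℝ S, ∀ i, Φt y i = A i y • y := by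
        intro y hy i
        obtain ⟨h1, h2⟩ := hβ y hy.1
        have hc := hcond y hy (fun j => L y j) ⟨h1, h2.symm⟩ i
        rw [hΦapp]
        have hj : ∀ j, (A i (x j) * L y j) • x j = A i y • ((L y j) • x j) := by
          intro j
          have h := hc j
          rw [mul_sub, sub_eq_zero] at h
          rw [smul_smul, mul_comm (A i (x j)) (L y j), h, mul_comm]
        rw [Finset.sum_congr rfl fun j _ => hj j, ← Finset.smul_sum, h2]
      -- total-sum marginal
      have hsum : ∀ s ∈ S, ∑ i, Φt s i = s := by
        intro s hs
        obtain ⟨h1, h2⟩ := hβ s hs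
        have hj : ∀ j, ∑ i, (A i (x j) * L s j) • x j = (L s j) • x j := by
          intro j
          rw [← Finset.sum_smul, ← Finset.sum_mul]
          have : ∑ i, A i (x j) = u (x j) := by
            rw [← hAsum]; simp [LinearMap.sum_apply]
          rw [this, hux j, one_mul]
        calc ∑ i, Φt s i = ∑ i, ∑ j, (A i (x j) * L s j) • x j := by
              exact Finset.sum_congr rfl fun i _ => hΦapp s i
          _ = ∑ j, ∑ i, (A i (x j) * L s j) • x j := Finset.sum_comm
          _ = ∑ j, (L s j) • x j := Finset.sum_congr rfl fun j _ => hj j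
          _ = s := h2
      -- observable marginal, by Krein–Milman
      have hmarg : ∀ i, ∀ s ∈ S, u (Φt s i) = A i s := by
        intro i
        set g : V →ₗ[ℝ] ℝ := u ∘ₗ ((LinearMap.proj i).comp Φt) - A i with hg
        have hsub : S ⊆ (LinearMap.ker g : Set V) := by
          refine aux_subset_of_closed_convex hScvx hScpt
            (Submodule.closed_of_finiteDimensional _) (LinearMap.ker g).convex ?_
          intro y hy
          have : g y = 0 := by
            rw [hg]
            simp only [LinearMap.sub_apply, LinearMap.comp_apply, LinearMap.proj_apply]
            rw [hext y hy i, map_smul, smul_eq_mul, hu y hy.1, mul_one, sub_self]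
          exact LinearMap.mem_ker.2 this
        intro s hs
        have := LinearMap.mem_ker.1 (hsub hs)
        rw [hg] at this
        simp only [LinearMap.sub_apply, LinearMap.comp_apply, LinearMap.proj_apply] at this
        linarith [this]
      -- positivity, by Krein–Milman
      have hcone : ∀ i, ∀ s ∈ S, InCone S (Φt s i) := by
        intro i
        have hsub : S ⊆ ((LinearMap.proj i).comp Φt) ⁻¹' (aux_D S) := by
          refine aux_subset_of_closed_convex hScvx hScpt
            ((aux_D_compact hScpt).isClosed.preimage
              ((LinearMap.proj i).comp Φt).continuous_of_finiteDimensional)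
            ((aux_D_convex hScvx).linear_preimage _) ?_
          intro y hy
          have : Φt y i = A i y • y := hext y hy i
          simp only [Set.mem_preimage, LinearMap.comp_apply, LinearMap.proj_apply, this]
          exact aux_mem_D (hAeff i y hy.1).1 (hAeff i y hy.1).2 hy.1
        intro s hs
        exact aux_D_inCone (hsub hs)
      refine ⟨Φt, ?_, hsum, fun s hs i => hmarg i s hs⟩
      intro s hs
      refine ⟨fun i => hcone i s hs, ?_⟩
      rw [← map_sum, hsum s hs, hu s hs]
    obtain ⟨Φt, h1, h2, h3⟩ := main
    exact ⟨Φt, h1, fun s hs => by simpa using h2 s hs, h3⟩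
end

section
/- The set of trivial observables on a state space S equals the intersection of the simulation sets of all non-trivial observables: T_1 = ⋂_{B ∉ T_1} simu(B), where simu(B) = {A : B → A}, i.e., any observable that is a post-processing of every non-trivial observable is itself trivial. -/
/-- A trivial observable: `A x = p x • u` for a probability distribution `p`. -/
def IsTrivial {V : Type*} [AddCommGroup V] [Module ℝ V]
    (u : V →ₗ[ℝ] ℝ) {n : ℕ} (A : Fin n → (V →ₗ[ℝ] ℝ)) : Prop :=
  ∃ p : Fin n → ℝ, (∀ x, 0 ≤ p x) ∧ ∑ x, p x = 1 ∧ ∀ x, A x = p x • u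

/-- `A` is a post-processing of `B` (i.e. `B → A`, `A ∈ simu(B)`): there is a
right-stochastic matrix `ν` with `A y = ∑ₓ ν x y • B x`. -/
def IsPostProc {V : Type*} [AddCommGroup V] [Module ℝ V]
    {l k : ℕ} (B : Fin l → (V →ₗ[ℝ] ℝ)) (A : Fin k → (V →ₗ[ℝ] ℝ)) : Prop :=
  ∃ ν : Fin l → Fin k → ℝ,
    (∀ x y, 0 ≤ ν x y) ∧ (∀ x, ∑ y, ν x y = 1) ∧
    ∀ y, A y = ∑ x, ν x y • B x

section

variable {V : Type*} [AddCommGroup V] [Module ℝ V] {S : Set V} {u : V →ₗ[ℝ] ℝ}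

theorem IsEffect.smul {e : V →ₗ[ℝ] ℝ} (he : IsEffect S e) {c : ℝ} (hc₀ : 0 ≤ c) (hc₁ : c ≤ 1) :
    IsEffect S (c • e) := fun s hs => by
  obtain ⟨he₀, he₁⟩ := he s hs
  simp only [LinearMap.smul_apply, smul_eq_mul]
  exact ⟨mul_nonneg hc₀ he₀, mul_le_one₀ hc₁ he₀ he₁⟩

theorem isObservable_pair (hu : ∀ s ∈ S, u s = 1) {e : V →ₗ[ℝ] ℝ} (he : IsEffect S e) :
    IsObservable S u ![e, u - e] := by
  refine ⟨fun i => ?_, by simp⟩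
  fin_cases i
  · exact he
  · intro s hs
    obtain ⟨he₀, he₁⟩ := he s hs
    simp [hu s hs, he₀, he₁]

theorem not_isTrivial_pair {e : V →ₗ[ℝ] ℝ} (he : ∀ c : ℝ, e ≠ c • u) :
    ¬ IsTrivial u ![e, u - e] := fun ⟨p, _, _, hp⟩ => he (p 0) (hp 0)

theorem isPostProc_of_isTrivial {l k : ℕ} {B : Fin l → V →ₗ[ℝ] ℝ} {A : Fin k → V →ₗ[ℝ] ℝ}
    (hB : ∑ x, B x = u) (hA : IsTrivial u A) : IsPostProc B A := by
  obtain ⟨p, hp₀, hp₁, hpA⟩ := hA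
  exact ⟨fun _ y => p y, fun _ y => hp₀ y, fun _ => hp₁, fun y => by rw [hpA, ← hB, Finset.smul_sum]⟩

theorem IsPostProc.exists_eq_smul_add_smul_of_pair {k : ℕ} {A : Fin k → V →ₗ[ℝ] ℝ}
    {f : V →ₗ[ℝ] ℝ} (h : IsPostProc ![f, u - f] A) (y : Fin k) :
    ∃ a b : ℝ, |b| ≤ 1 ∧ A y = a • u + b • f := by
  obtain ⟨ν, hν₀, hν₁, hνA⟩ := h
  have hν_le_one : ∀ x, ν x y ≤ 1 := fun x =>
    hν₁ x ▸ Finset.single_le_sum (fun y' _ => hν₀ x y') (Finset.mem_univ y)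
  refine ⟨ν 1 y, ν 0 y - ν 1 y, abs_sub_le_iff.mpr ?_, ?_⟩
  · constructor <;> linarith [hν₀ 0 y, hν₀ 1 y, hν_le_one 0, hν_le_one 1]
  · rw [hνA, Fin.sum_univ_two]
    simp only [Matrix.cons_val_zero, Matrix.cons_val_one]
    module

theorem isTrivial_of_forall_eq_smul {k : ℕ} {A : Fin k → V →ₗ[ℝ] ℝ} (hA : IsObservable S u A)
    {s₀ : V} (hs₀ : s₀ ∈ S) (hus₀ : u s₀ = 1) (h : ∀ y, ∃ c : ℝ, A y = c • u) : IsTrivial u A := by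
  choose c hc using h
  have hcA : ∀ y, c y = A y s₀ := fun y => by simp [hc y, hus₀]
  refine ⟨c, fun y => hcA y ▸ (hA.1 y s₀ hs₀).1, ?_, hc⟩
  simp_rw [hcA, ← LinearMap.sum_apply, hA.2, hus₀]

end

theorem LinearIndependent.exists_eq_smul_of_forall_abs_coeff_le {M : Type*} [AddCommGroup M]
    [Module ℝ M] {x y v : M} (hxy : LinearIndependent ℝ ![x, y])
    (h : ∀ ε > 0, ∃ a b : ℝ, |b| ≤ ε ∧ v = a • x + b • y) : ∃ a : ℝ, v = a • x := by
  obtain ⟨a, b, -, hv⟩ := h 1 one_pos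
  have hb : b = 0 := by
    refine abs_nonpos_iff.mp (le_of_forall_gt_imp_ge_of_dense fun ε hε => ?_)
    obtain ⟨a', b', hb', hv'⟩ := h ε hε
    rwa [(hxy.eq_of_pair (hv.symm.trans hv')).2]
  exact ⟨a, by simpa [hb] using hv⟩

theorem trivial_iff_postProc_of_every_nontrivial_general
    {V : Type*} [NormedAddCommGroup V] [NormedSpace ℝ V]
    (S : Set V) (hSne : S.Nonempty)
    (u : V →ₗ[ℝ] ℝ) (hu : ∀ s ∈ S, u s = 1)
    (hnontriv : ∃ e : V →ₗ[ℝ] ℝ, IsEffect S e ∧ ∀ c : ℝ, e ≠ c • u)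
    {k : ℕ} (A : Fin k → (V →ₗ[ℝ] ℝ)) (hA : IsObservable S u A) :
    IsTrivial u A ↔
      ∀ (l : ℕ) (B : Fin l → (V →ₗ[ℝ] ℝ)),
        IsObservable S u B → ¬ IsTrivial u B → IsPostProc B A := by
  refine ⟨fun hA l B hB _ => isPostProc_of_isTrivial hB.2 hA, fun h => ?_⟩
  obtain ⟨e, he, he_ne⟩ := hnontriv
  obtain ⟨s₀, hs₀⟩ := hSne
  have hue : LinearIndependent ℝ ![u, e] :=
    (LinearIndependent.pair_iff' fun hu0 => by simpa [hu0] using hu s₀ hs₀).mpr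
      fun c hc => he_ne c hc.symm
  refine isTrivial_of_forall_eq_smul hA hs₀ (hu s₀ hs₀) fun y =>
    hue.exists_eq_smul_of_forall_abs_coeff_le fun ε hε => ?_
  set δ := min ε 1
  have hδ : 0 < δ := lt_min hε one_pos
  have hδe_ne : ∀ c : ℝ, δ • e ≠ c • u := fun c hc =>
    he_ne (δ⁻¹ * c) (by rw [mul_smul, ← hc, inv_smul_smul₀ hδ.ne'])
  obtain ⟨a, b, hb, hAy⟩ := (h 2 _ (isObservable_pair hu (he.smul hδ.le (min_le_right _ _)))
    (not_isTrivial_pair hδe_ne)).exists_eq_smul_add_smul_of_pair y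
  refine ⟨a, b * δ, ?_, by rw [hAy, mul_smul]⟩
  calc |b * δ| = |b| * δ := by rw [abs_mul, abs_of_pos hδ]
    _ ≤ δ := mul_le_of_le_one_left hδ.le hb
    _ ≤ ε := min_le_left ε 1

/-- Prop. 5: `T₁ = ⋂_{B ∉ T₁} simu(B)`: an observable is trivial iff
it is a post-processing of every non-trivial observable.  (It is assumed that
non-trivial observables exist: there is an effect not proportional to `u`.) -/
theorem trivial_iff_postProc_of_every_nontrivial
    {V : Type*} [NormedAddCommGroup V] [NormedSpace ℝ V] [FiniteDimensional ℝ V]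
    (S : Set V) (hSne : S.Nonempty) (hScvx : Convex ℝ S) (hScpt : IsCompact S)
    (u : V →ₗ[ℝ] ℝ) (hu : ∀ s ∈ S, u s = 1)
    (hnontriv : ∃ e : V →ₗ[ℝ] ℝ, IsEffect S e ∧ ∀ c : ℝ, e ≠ c • u)
    {k : ℕ} (A : Fin k → (V →ₗ[ℝ] ℝ)) (hA : IsObservable S u A) :
    IsTrivial u A ↔
      ∀ (l : ℕ) (B : Fin l → (V →ₗ[ℝ] ℝ)),
        IsObservable S u B → ¬ IsTrivial u B → IsPostProc B A :=
  trivial_iff_postProc_of_every_nontrivial_general S hSne u hu hnontriv A hA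
end
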